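/- arXiv:0704.1074 — 5 statements merged into one kernel-verified Lean document; each statement's English description precedes it below -/
import Mathlib

section
/- Let A = (a_{ji}) be a d × ν matrix of nonnegative integers, K a field, and π : K[w_1,…,w_ν] → K[q_1,…,q_d] the K-algebra homomorphism defined by π(w_i) = ∏_{j=1}^d q_j^{a_{ji}}. A finite set of moves B = {z_1,…,z_L} ⊆ ℤ^ν with A z_l = 0 for all l is a Markov basis for A if and only if the kernel of π is generated, as an ideal of K[w_1,…,w_ν], by the binomials W^{z_1^+} − W^{z_1^-}, …, W^{z_L^+} − W^{z_L^-}. -/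
/-!
For an additive congruence `c` on a commutative monoid `M`, the kernel of `R[M] → R[M ⧸ c]` is
generated by the binomials `X^a - X^b` with `c a b`: modulo them, every `f` is congruent to
`∑ f_m X^{s(m)}` for a choice of representatives `s(m)` of the classes, and that sum vanishes
when `f` maps to zero. If `c` is generated by pairs `(u_l, v_l)`, the binomials
`X^{u_l} - X^{v_l}` already suffice, because "`X^a - X^b` lies in their span" is a congruence.

The map `π` is `R[x ↦ A x]`, whose kernel is that of `R[ℕ^ν] → R[ℕ^ν ⧸ ker A]`. The congruence
generated by the pairs `(z_l⁺, z_l⁻)` is connectivity by moves, since each move has the form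
`w + z_l⁻ ↦ w + z_l⁺` or its reverse. So both sides of the equivalence say that connectivity by
moves equals `ker A` (it is always contained in it, as `A z_l = 0`): the Markov property directly,
the ideal identity because the kernel ideal determines the congruence, `X^a - X^b` lying in it
exactly when `a` and `b` are congruent.
-/

open MvPolynomial Relation

namespace AddMonoidAlgebra

section Ring

variable {R M : Type*} [Ring R] [AddCommMonoid M]

theorem ker_mapDomainRingHom_eq_ker_mk' {N : Type*} [AddCommMonoid N] (g : M →+ N) :
    RingHom.ker (mapDomainRingHom R g) = RingHom.ker (mapDomainRingHom R (AddCon.ker g).mk') := by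
  rw [← AddCon.lift_comp_mk' (c := AddCon.ker g) (f := g) le_rfl, mapDomainRingHom_comp]
  exact RingHom.ker_comp_of_injective _ (mapDomain_injective (AddCon.kerLift_injective g))

theorem single_sub_single_mem_ker_mk'_iff [Nontrivial R] (c : AddCon M) (a b : M) :
    single a (1 : R) - single b 1 ∈ RingHom.ker (mapDomainRingHom R c.mk') ↔ c a b := by
  rw [RingHom.mem_ker, map_sub, sub_eq_zero, mapDomainRingHom_apply, mapDomainRingHom_apply,
    mapDomain_single, mapDomain_single, single_left_inj one_ne_zero]
  exact c.eq

theorem ker_mapDomainRingHom_mk'_injective [Nontrivial R] :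
    Function.Injective fun c : AddCon M => RingHom.ker (mapDomainRingHom R c.mk') :=
  fun c d h => AddCon.ext fun a b => by
    have := SetLike.ext_iff.mp h (single a (1 : R) - single b 1)
    rwa [single_sub_single_mem_ker_mk'_iff, single_sub_single_mem_ker_mk'_iff] at this

theorem sub_mapDomain_mapDomainRingHom_mem {c : AddCon M} {s : c.Quotient → M}
    (hs : Function.LeftInverse c.mk' s) {J : Ideal R[M]}
    (hJ : ∀ a b, c a b → single a (1 : R) - single b 1 ∈ J) (f : R[M]) :
    f - mapDomain s (mapDomainRingHom R c.mk' f) ∈ J := by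
  induction f using induction_linear with
  | zero => simp [mapDomain_zero]
  | add f g hf hg =>
    rw [map_add, mapDomain_add, add_sub_add_comm]
    exact J.add_mem hf hg
  | single m r =>
    have hm : c (s (c.mk' m)) m := c.eq.mp (hs _)
    have := Submodule.smul_of_tower_mem J r (hJ _ _ (c.symm hm))
    rwa [smul_sub, smul_single, smul_single, smul_eq_mul, mul_one, ← mapDomain_single (f := s),
      ← mapDomain_single (f := c.mk'), ← mapDomainRingHom_apply] at this

end Ring

section CommRing

variable {R M ι : Type*} [CommRing R] [AddCommMonoid M]

theorem single_sub_single_mem_span_of_addConGen (u v : ι → M) {a b : M}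
    (h : addConGen (fun a b => ∃ l, u l = a ∧ v l = b) a b) :
    single a (1 : R) - single b 1 ∈
      Ideal.span (Set.range fun l => single (u l) (1 : R) - single (v l) 1) := by
  induction h with
  | of a b hab =>
    obtain ⟨l, rfl, rfl⟩ := hab
    exact Ideal.subset_span ⟨l, rfl⟩
  | refl => simp
  | symm _ ih => simpa using neg_mem ih
  | trans _ _ ih ih' => simpa using add_mem ih ih'
  | @add a b a' b' _ _ ih ih' =>
    have : single (a + a') (1 : R) - single (b + b') 1 =
        single a 1 * (single a' 1 - single b' 1) + (single a 1 - single b 1) * single b' 1 := by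
      simp only [mul_sub, sub_mul, single_mul_single, mul_one]; abel
    rw [this]
    exact add_mem (Ideal.mul_mem_left _ _ ih') (Ideal.mul_mem_right _ _ ih)

theorem ker_mapDomainRingHom_mk'_addConGen (u v : ι → M) :
    RingHom.ker (mapDomainRingHom R (addConGen fun a b => ∃ l, u l = a ∧ v l = b).mk') =
      Ideal.span (Set.range fun l => single (u l) (1 : R) - single (v l) 1) := by
  set c := addConGen fun a b => ∃ l, u l = a ∧ v l = b
  apply le_antisymm
  · intro f hf
    simpa [RingHom.mem_ker.mp hf, mapDomain_zero] using
      sub_mapDomain_mapDomainRingHom_mem (Function.rightInverse_surjInv c.mk'_surjective)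
        (fun a b h => single_sub_single_mem_span_of_addConGen u v h) f
  · rw [Ideal.span_le]
    rintro _ ⟨l, rfl⟩
    rw [SetLike.mem_coe, RingHom.mem_ker, map_sub, sub_eq_zero, mapDomainRingHom_apply,
      mapDomainRingHom_apply, mapDomain_single, mapDomain_single]
    exact congrArg (single · 1) (c.eq.mpr (AddCon.le_addConGen _ _ ⟨l, rfl, rfl⟩))

end CommRing

end AddMonoidAlgebra

theorem Relation.reflTransGen_iff_exists_path {α : Type*} {r : α → α → Prop} {a b : α} :
    ReflTransGen r a b ↔
      ∃ (N : ℕ) (p : ℕ → α), p 0 = a ∧ p N = b ∧ ∀ m < N, r (p m) (p (m + 1)) := by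
  constructor
  · intro h
    induction h using ReflTransGen.head_induction_on with
    | refl => exact ⟨0, fun _ => b, rfl, rfl, by simp⟩
    | head hac _ ih =>
      obtain ⟨N, p, rfl, hpN, hp⟩ := ih
      refine ⟨N + 1, fun | 0 => _ | m + 1 => p m, rfl, hpN, ?_⟩
      rintro (_ | m) hm
      · exact hac
      · exact hp m (by omega)
  · rintro ⟨N, p, rfl, rfl, hp⟩
    induction N with
    | zero => exact .refl
    | succ N ih => exact (ih fun m hm => hp m (by omega)).tail (hp N (by omega))

section Moves

variable {σ ι : Type*}

def IsMove (z : ι → σ → ℤ) (x y : σ → ℕ) : Prop :=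
  ∃ l, (∀ i, (y i : ℤ) - x i = z l i) ∨ (∀ i, (y i : ℤ) - x i = -z l i)

variable {z : ι → σ → ℤ} {x y : σ → ℕ}

theorem IsMove.symm : IsMove z x y → IsMove z y x := by
  rintro ⟨l, h | h⟩
  · exact ⟨l, .inr fun i => by linarith [h i]⟩
  · exact ⟨l, .inl fun i => by linarith [h i]⟩

theorem IsMove.add_right (w : σ → ℕ) : IsMove z x y → IsMove z (x + w) (y + w) := by
  rintro ⟨l, h | h⟩
  · exact ⟨l, .inl fun i => by simp [h i]⟩
  · exact ⟨l, .inr fun i => by simp [h i]⟩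

theorem IsMove.add_left (w : σ → ℕ) : IsMove z x y → IsMove z (w + x) (w + y) := by
  simpa only [add_comm w] using IsMove.add_right w

variable (z) in
def moveCon : AddCon (σ →₀ ℕ) where
  r a b := ReflTransGen (IsMove z) ⇑a ⇑b
  iseqv := ⟨fun _ => .refl, fun h =>
    ReflTransGen.mono (fun _ _ => IsMove.symm) _ _ (reflTransGen_swap.mpr h), .trans⟩
  add' {a b c d} hab hcd := by
    simp only [Finsupp.coe_add]
    exact (hab.lift (· + ⇑c) fun _ _ => IsMove.add_right ⇑c).trans
      (hcd.lift (⇑b + ·) fun _ _ => IsMove.add_left ⇑b)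

theorem moveCon_iff {a b : σ →₀ ℕ} : moveCon z a b ↔ ReflTransGen (IsMove z) ⇑a ⇑b :=
  Iff.rfl

variable [Finite σ]

noncomputable def posPartFinsupp (v : σ → ℤ) : σ →₀ ℕ :=
  Finsupp.equivFunOnFinite.symm fun i => (v i).toNat

@[simp]
theorem posPartFinsupp_apply (v : σ → ℤ) (i : σ) : posPartFinsupp v i = (v i).toNat :=
  rfl

theorem exists_add_posPartFinsupp {v : σ → ℤ} {a b : σ →₀ ℕ}
    (h : ∀ i, (b i : ℤ) - a i = v i) :
    ∃ w, a = w + posPartFinsupp (-v) ∧ b = w + posPartFinsupp v := by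
  refine ⟨a - posPartFinsupp (-v), ?_, ?_⟩ <;> ext i <;> have := h i <;>
    simp only [Finsupp.add_apply, Finsupp.tsub_apply, posPartFinsupp_apply, Pi.neg_apply] <;> omega

variable (z) in
theorem moveCon_eq_addConGen :
    moveCon z =
      addConGen fun a b => ∃ l, posPartFinsupp (z l) = a ∧ posPartFinsupp (-z l) = b := by
  set c := addConGen fun a b => ∃ l, posPartFinsupp (z l) = a ∧ posPartFinsupp (-z l) = b
  have hstep {a b : σ →₀ ℕ} (h : IsMove z ⇑a ⇑b) : c a b := by
    obtain ⟨l, h | h⟩ := h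
    · obtain ⟨w, rfl, rfl⟩ := exists_add_posPartFinsupp h
      exact c.symm (c.add (c.refl w) (AddCon.le_addConGen _ _ ⟨l, rfl, rfl⟩))
    · obtain ⟨w, rfl, rfl⟩ := exists_add_posPartFinsupp (v := -z l) h
      rw [neg_neg]
      exact c.add (c.refl w) (AddCon.le_addConGen _ _ ⟨l, rfl, rfl⟩)
  refine le_antisymm (fun a b h => ?_) (AddCon.addConGen_le.mpr ?_)
  · have key (y) (hy : ReflTransGen (IsMove z) ⇑a y) :
        c a (Finsupp.equivFunOnFinite.symm y) := by
      induction hy with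
      | refl => simpa using c.refl a
      | tail _ hmove ih => exact c.trans ih (hstep (by simpa using hmove))
    simpa using key _ h
  · rintro _ _ ⟨l, rfl, rfl⟩
    refine .single ⟨l, .inr fun i => ?_⟩
    simp only [posPartFinsupp_apply, Pi.neg_apply]
    omega

end Moves

section Toric

variable {σ τ : Type*} [Fintype σ]

noncomputable def mulVecHom [Finite τ] (A : τ → σ → ℕ) :
    (σ →₀ ℕ) →+ (τ →₀ ℕ) where
  toFun a := Finsupp.equivFunOnFinite.symm fun j => ∑ i, A j i * a i
  map_zero' := by ext; simp
  map_add' a b := by ext; simp [mul_add, Finset.sum_add_distrib]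

@[simp] theorem mulVecHom_apply [Finite τ] (A : τ → σ → ℕ) (a : σ →₀ ℕ) (j : τ) :
    mulVecHom A a j = ∑ i, A j i * a i := rfl

theorem MvPolynomial.prod_univ_X_pow_eq_monomial {R : Type*} [CommSemiring R] (e : σ → ℕ) :
    ∏ i, (X i : MvPolynomial σ R) ^ e i = monomial (Finsupp.equivFunOnFinite.symm e) 1 := by
  rw [monomial_eq, C_1, one_mul, Finsupp.prod_fintype _ _ (by simp)]
  rfl

theorem MvPolynomial.aeval_prod_X_pow_eq_mapDomainAlgHom {R : Type*} [CommSemiring R] [Fintype τ]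
    (A : τ → σ → ℕ) :
    aeval (fun i => ∏ j, (X j : MvPolynomial τ R) ^ A j i) =
      AddMonoidAlgebra.mapDomainAlgHom R R (mulVecHom A) := by
  refine algHom_ext fun i => ?_
  rw [aeval_X, prod_univ_X_pow_eq_monomial, AddMonoidAlgebra.mapDomainAlgHom_apply, X,
    ← single_eq_monomial, ← single_eq_monomial, AddMonoidAlgebra.mapDomain_single]
  congr 1
  ext j
  classical
  simp [Finsupp.single_apply]

end Toric

section Markov

variable {σ τ ι : Type*} [Fintype σ] [Fintype τ]

def IsMarkovBasis (A : τ → σ → ℕ) (z : ι → σ → ℤ) : Prop :=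
  ∀ x y : σ → ℕ, (∀ j, ∑ i, A j i * x i = ∑ i, A j i * y i) →
    ∃ (N : ℕ) (path : ℕ → σ → ℕ), path 0 = x ∧ path N = y ∧
      ∀ m < N, IsMove z (path m) (path (m + 1))

variable {A : τ → σ → ℕ} {z : ι → σ → ℤ}

theorem ker_mulVecHom_iff {a b : σ →₀ ℕ} :
    AddCon.ker (mulVecHom A) a b ↔ ∀ j, ∑ i, A j i * a i = ∑ i, A j i * b i := by
  simp [AddCon.ker_rel, Finsupp.ext_iff]

theorem isMarkovBasis_iff : IsMarkovBasis A z ↔ AddCon.ker (mulVecHom A) ≤ moveCon z := by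
  refine ⟨fun H a b hab => reflTransGen_iff_exists_path.mpr (H a b (ker_mulVecHom_iff.mp hab)),
    fun H x y hxy => reflTransGen_iff_exists_path.mp ?_⟩
  simpa [moveCon_iff] using
    H (x := Finsupp.equivFunOnFinite.symm x) (y := Finsupp.equivFunOnFinite.symm y)
      (ker_mulVecHom_iff.mpr (by simpa using hxy))

theorem moveCon_le_ker_mulVecHom (hz : ∀ l j, ∑ i, (A j i : ℤ) * z l i = 0) :
    moveCon z ≤ AddCon.ker (mulVecHom A) := by
  rw [moveCon_eq_addConGen, AddCon.addConGen_le]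
  rintro _ _ ⟨l, rfl, rfl⟩
  refine ker_mulVecHom_iff.mpr fun j => ?_
  rw [← Nat.cast_inj (R := ℤ), ← sub_eq_zero]
  simpa only [Nat.cast_sum, Nat.cast_mul, posPartFinsupp_apply, Pi.neg_apply,
    ← Finset.sum_sub_distrib, ← mul_sub, Int.toNat_sub_toNat_neg] using hz l j

end Markov

/-- Diaconis–Sturmfels: Let A = (a_{ji}) be a d × ν matrix of
nonnegative integers, K a field, and π : K[w_1,…,w_ν] → K[q_1,…,q_d] the
K-algebra homomorphism with π(w_i) = ∏_j q_j^{a_{ji}}.  A finite set of moves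
B = {z_1,…,z_L} ⊆ ℤ^ν with A z_l = 0 is a Markov basis for A (i.e. any two
nonnegative integer vectors x, y with A x = A y can be connected by a finite
sequence of steps ±z_l staying in ℕ^ν) if and only if ker π is generated, as
an ideal, by the binomials W^{z_l^+} − W^{z_l^-}, l = 1,…,L. -/
theorem stmt_0 (d ν : ℕ) (A : Fin d → Fin ν → ℕ) (K : Type*) [Field K]
    (L : ℕ) (z : Fin L → Fin ν → ℤ)
    (hz : ∀ l j, ∑ i, (A j i : ℤ) * z l i = 0) :
    ((∀ x y : Fin ν → ℕ, (∀ j, ∑ i, A j i * x i = ∑ i, A j i * y i) →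
        ∃ (N : ℕ) (path : ℕ → Fin ν → ℕ), path 0 = x ∧ path N = y ∧
          ∀ m < N, ∃ l : Fin L,
            (∀ i, (path (m + 1) i : ℤ) - (path m i : ℤ) = z l i) ∨
            (∀ i, (path (m + 1) i : ℤ) - (path m i : ℤ) = - z l i))
      ↔
      RingHom.ker
          (aeval (fun i : Fin ν => ∏ j, (X j : MvPolynomial (Fin d) K) ^ A j i) :
            MvPolynomial (Fin ν) K →ₐ[K] MvPolynomial (Fin d) K)
        = Ideal.span (Set.range fun l : Fin L =>
            (∏ i, (X i : MvPolynomial (Fin ν) K) ^ (z l i).toNat)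
              - ∏ i, (X i : MvPolynomial (Fin ν) K) ^ (- z l i).toNat)) := by
  have hker : RingHom.ker (aeval fun i => ∏ j, (X j : MvPolynomial (Fin d) K) ^ A j i) =
      RingHom.ker (AddMonoidAlgebra.mapDomainRingHom K (AddCon.ker (mulVecHom A)).mk') := by
    rw [aeval_prod_X_pow_eq_mapDomainAlgHom]
    exact AddMonoidAlgebra.ker_mapDomainRingHom_eq_ker_mk' _
  have hspan : Ideal.span (Set.range fun l =>
        (∏ i, (X i : MvPolynomial (Fin ν) K) ^ (z l i).toNat)
          - ∏ i, (X i : MvPolynomial (Fin ν) K) ^ (- z l i).toNat) =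
      RingHom.ker (AddMonoidAlgebra.mapDomainRingHom K (moveCon z).mk') := by
    rw [moveCon_eq_addConGen, AddMonoidAlgebra.ker_mapDomainRingHom_mk'_addConGen]
    simp only [prod_univ_X_pow_eq_monomial, ← single_eq_monomial]
    rfl
  rw [hker, hspan, AddMonoidAlgebra.ker_mapDomainRingHom_mk'_injective.eq_iff]
  change IsMarkovBasis A z ↔ _
  rw [isMarkovBasis_iff]
  exact ⟨fun h => le_antisymm h (moveCon_le_ker_mulVecHom hz), fun h => h.le⟩
end

section
/- Let A = (a_{ji}) be a d × ν matrix of nonnegative integers, K a field, and π : K[w_1,…,w_ν] → K[q_1,…,q_d] the K-algebra homomorphism defined by π(w_i) = ∏_{j=1}^d q_j^{a_{ji}}. Then the kernel of π equals the ideal of K[w_1,…,w_ν] generated by all binomials W^{z^+} − W^{z^-}, where z ranges over the integer vectors in ℤ^ν with A z = 0. -/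
/-!
A monomial `W^u` is sent by `π` to the monomial `Q^(A u)`, so `π` is the map of monoid algebras
induced by `u ↦ A u` on exponents. The kernel of such a map is spanned over `K` by differences
`W^u - W^v` with `A u = A v`: moving every exponent of `p` to a fixed representative of its
fibre gives a polynomial that depends only on `π p`, and the difference is such a combination.
Finally `W^u - W^v = W^(u ⊓ v) (W^(z⁺) - W^(z⁻))` for `z = u - v`, and `A z = 0`.
-/

open MvPolynomial Matrix

namespace AddMonoidAlgebra

variable {M N O R : Type*}

theorem mapDomain_eq_sum_single [Semiring R] (f : M → N) (x : AddMonoidAlgebra R M) :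
    mapDomain f x = x.coeff.sum fun a r => single (f a) r := by
  conv_lhs => rw [← sum_coeff_single x]
  simp only [mapDomain_sum, mapDomain_single]

theorem mapDomain_comp [Semiring R] (f : M → N) (g : N → O) (x : AddMonoidAlgebra R M) :
    mapDomain (g ∘ f) x = mapDomain g (mapDomain f x) := by
  ext
  simp [Finsupp.mapDomain_comp]

theorem mem_span_single_sub_single_of_mapDomain_eq_zero [Ring R] {f : M → N}
    {x : AddMonoidAlgebra R M} (hx : mapDomain f x = 0) :
    x ∈ Submodule.span R {y | ∃ a b, f a = f b ∧ y = single a 1 - single b 1} := by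
  classical
  rcases isEmpty_or_nonempty M with hM | hM
  · rw [coeff_injective (Subsingleton.elim x.coeff 0)]
    exact zero_mem _
  -- `s` sends each fibre of `f` to a single point of it, so `mapDomain s x` only sees the
  -- fibre sums of `x`, which all vanish.
  set s := Function.invFun f ∘ f
  have hfs : ∀ a, f (s a) = f a := fun a => Function.invFun_eq ⟨a, rfl⟩
  have hsx : mapDomain s x = 0 := by rw [mapDomain_comp, hx, mapDomain_zero]
  have hx_eq : x = x.coeff.sum fun a r => r • (single a 1 - single (s a) 1) := by
    simp only [smul_sub, smul_single', mul_one, Finsupp.sum_sub, sum_coeff_single,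
      ← mapDomain_eq_sum_single, hsx, sub_zero]
  rw [hx_eq]
  exact Submodule.sum_mem _ fun a _ =>
    Submodule.smul_mem _ _ (Submodule.subset_span ⟨a, s a, (hfs a).symm, rfl⟩)

end AddMonoidAlgebra

theorem Matrix.sum_mul_eq_zero_iff_mulVec_eq {σ τ : Type*} [Fintype σ] (A : Matrix τ σ ℕ)
    {z : σ → ℤ} {u v : σ → ℕ} (h : ∀ i, z i = u i - v i) (j : τ) :
    ∑ i, (A j i : ℤ) * z i = 0 ↔ (A *ᵥ u) j = (A *ᵥ v) j := by
  simp only [h, mul_sub, Finset.sum_sub_distrib, sub_eq_zero, mulVec, dotProduct]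
  exact_mod_cast Iff.rfl

namespace MvPolynomial

theorem ker_eq_span_monomial_sub_monomial {σ τ R : Type*} [CommRing R]
    (f : MvPolynomial σ R →ₐ[R] MvPolynomial τ R) (φ : (σ →₀ ℕ) → (τ →₀ ℕ))
    (hf : ∀ u, f (monomial u 1) = monomial (φ u) 1) :
    RingHom.ker f = Ideal.span {p | ∃ u v, φ u = φ v ∧ p = monomial u 1 - monomial v 1} := by
  have hf_monomial : ∀ u c, f (monomial u c) = monomial (φ u) c := fun u c => by
    rw [← mul_one c, ← smul_eq_mul, ← smul_monomial, map_smul, hf, smul_monomial]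
  have hf_eq : ∀ p, f p = AddMonoidAlgebra.mapDomain φ p := by
    intro p
    induction p using MvPolynomial.induction_on' with
    | monomial u c => exact (hf_monomial u c).trans AddMonoidAlgebra.mapDomain_single.symm
    | add p q hp hq => rw [map_add, hp, hq, AddMonoidAlgebra.mapDomain_add]
  apply le_antisymm
  · intro p hp
    have hspan := AddMonoidAlgebra.mem_span_single_sub_single_of_mapDomain_eq_zero
      (R := R) (f := φ) (x := p) (by rw [← hf_eq]; exact hp)
    refine (Submodule.span_le (p := (Ideal.span _).restrictScalars R)).mpr ?_ hspan
    rintro _ ⟨u, v, huv, rfl⟩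
    exact Ideal.subset_span ⟨u, v, huv, rfl⟩
  · rw [Ideal.span_le]
    rintro _ ⟨u, v, huv, rfl⟩
    simp [RingHom.mem_ker, hf, huv]

variable {σ τ R : Type*} [Fintype σ] [CommRing R]

theorem prod_univ_X_pow_eq_monomial_s1 (b : σ → ℕ) :
    ∏ i, (X i : MvPolynomial σ R) ^ b i = monomial (Finsupp.equivFunOnFinite.symm b) 1 := by
  rw [monomial_eq, C_1, one_mul, Finsupp.prod_fintype _ _ fun i => pow_zero _]
  rfl

theorem aeval_prod_X_pow_monomial [Fintype τ] (A : Matrix τ σ ℕ) (u : σ →₀ ℕ) :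
    aeval (fun i => ∏ j, (X j : MvPolynomial τ R) ^ A j i) (monomial u (1 : R))
      = monomial (Finsupp.equivFunOnFinite.symm (A *ᵥ ⇑u)) 1 := by
  rw [aeval_monomial, map_one, one_mul, Finsupp.prod_fintype _ _ fun i => pow_zero _,
    ← prod_univ_X_pow_eq_monomial_s1]
  simp only [← Finset.prod_pow, ← pow_mul]
  rw [Finset.prod_comm]
  simp only [Finset.prod_pow_eq_pow_sum, mulVec, dotProduct]

theorem span_monomial_sub_monomial_eq_span_binomial (A : Matrix τ σ ℕ) :
    Ideal.span {p : MvPolynomial σ R |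
        ∃ u v : σ →₀ ℕ, A *ᵥ ⇑u = A *ᵥ ⇑v ∧ p = monomial u 1 - monomial v 1}
      = Ideal.span {p | ∃ z : σ → ℤ, (∀ j, ∑ i, (A j i : ℤ) * z i = 0) ∧
          p = ∏ i, (X i : MvPolynomial σ R) ^ (z i).toNat - ∏ i, X i ^ (-z i).toNat} := by
  apply le_antisymm <;> rw [Ideal.span_le]
  · rintro _ ⟨u, v, huv, rfl⟩
    set z : σ → ℤ := fun i => u i - v i
    have hz : ∀ j, ∑ i, (A j i : ℤ) * z i = 0 := fun j =>
      (sum_mul_eq_zero_iff_mulVec_eq A (fun i => rfl) j).mpr (congrFun huv j)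
    have hfactor : monomial u (1 : R) - monomial v 1
        = monomial (u ⊓ v) 1 * (∏ i, X i ^ (z i).toNat - ∏ i, X i ^ (-z i).toNat) := by
      have hu : u ⊓ v + Finsupp.equivFunOnFinite.symm (fun i => (z i).toNat) = u := by
        ext i; simp [z]; omega
      have hv : u ⊓ v + Finsupp.equivFunOnFinite.symm (fun i => (-z i).toNat) = v := by
        ext i; simp [z]; omega
      rw [prod_univ_X_pow_eq_monomial_s1, prod_univ_X_pow_eq_monomial_s1, mul_sub, monomial_mul,
        monomial_mul, one_mul, hu, hv]
    rw [hfactor]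
    exact Ideal.mul_mem_left _ _ (Ideal.subset_span ⟨z, hz, rfl⟩)
  · rintro _ ⟨z, hz, rfl⟩
    refine Ideal.subset_span ⟨Finsupp.equivFunOnFinite.symm fun i => (z i).toNat,
      Finsupp.equivFunOnFinite.symm fun i => (-z i).toNat, ?_,
      by simp only [prod_univ_X_pow_eq_monomial_s1]⟩
    ext j
    exact (sum_mul_eq_zero_iff_mulVec_eq A (fun i => (Int.toNat_sub_toNat_neg (z i)).symm) j).mp
      (hz j)

end MvPolynomial

/-- Let A = (a_{ji}) be a d × ν matrix of nonnegative integers,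
K a field, and π : K[w_1,…,w_ν] → K[q_1,…,q_d] the K-algebra homomorphism
with π(w_i) = ∏_j q_j^{a_{ji}}.  Then ker π equals the ideal generated by all
binomials W^{z^+} − W^{z^-}, where z ranges over the integer vectors in ℤ^ν
with A z = 0. -/
theorem stmt_1 (d ν : ℕ) (A : Fin d → Fin ν → ℕ) (K : Type*) [Field K] :
    RingHom.ker
        (aeval (fun i : Fin ν => ∏ j, (X j : MvPolynomial (Fin d) K) ^ A j i) :
          MvPolynomial (Fin ν) K →ₐ[K] MvPolynomial (Fin d) K)
      = Ideal.span { p : MvPolynomial (Fin ν) K |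
          ∃ z : Fin ν → ℤ, (∀ j, ∑ i, (A j i : ℤ) * z i = 0) ∧
            p = (∏ i, (X i : MvPolynomial (Fin ν) K) ^ (z i).toNat)
              - ∏ i, (X i : MvPolynomial (Fin ν) K) ^ (- z i).toNat } := by
  rw [ker_eq_span_monomial_sub_monomial _ (fun u => Finsupp.equivFunOnFinite.symm (A *ᵥ ⇑u))
      (aeval_prod_X_pow_monomial A), ← span_monomial_sub_monomial_eq_span_binomial A]
  simp only [EmbeddingLike.apply_eq_iff_eq]
end

section
/- Let τ ≥ 1 and let γ_1 ≤ γ_2 ≤ ⋯ ≤ γ_{2τ} be a weakly increasing sequence of integers. For any integers s ≤ r, set ρ = #{ j ∈ {1,…,τ} : s ≤ γ_{2j−1} ≤ r } and σ = #{ j ∈ {1,…,τ} : s ≤ γ_{2j} ≤ r }. Then |ρ − σ| ≤ 1. -/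
lemma card_val_filter (τ lo hi : ℕ) (hhi : hi ≤ τ) (p : Fin τ → Prop) [DecidablePred p]
    (hp : ∀ j, p j ↔ lo ≤ j.1 ∧ j.1 < hi) :
    (Finset.univ.filter p).card = hi - lo := by
  have himg : (Finset.univ.filter p).image Fin.val = Finset.Ico lo hi := by
    ext k
    simp only [Finset.mem_image, Finset.mem_filter, Finset.mem_univ, true_and, Finset.mem_Ico]
    constructor
    · rintro ⟨j, hj, rfl⟩; exact (hp j).1 hj
    · rintro ⟨h1, h2⟩
      exact ⟨⟨k, lt_of_lt_of_le h2 hhi⟩, (hp _).2 ⟨h1, h2⟩, rfl⟩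
  calc (Finset.univ.filter p).card = ((Finset.univ.filter p).image Fin.val).card :=
        (Finset.card_image_of_injective _ Fin.val_injective).symm
    _ = hi - lo := by rw [himg, Nat.card_Ico]

/-- For a weakly increasing sequence γ_1 ≤ ⋯ ≤ γ_{2τ} of integers
and any integers s ≤ r, the number ρ of odd-position entries lying in [s, r]
and the number σ of even-position entries lying in [s, r] satisfy |ρ − σ| ≤ 1.
(Positions are 1-based: odd positions γ_1, γ_3, …, γ_{2τ−1}, even positions
γ_2, γ_4, …, γ_{2τ}; in the 0-based indexing below these are indices
2j and 2j+1 for j = 0, …, τ−1.) -/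
theorem stmt_3 (τ : ℕ) (hτ : 1 ≤ τ) (γ : Fin (2 * τ) → ℤ) (hγ : Monotone γ)
    (s r : ℤ) (hsr : s ≤ r) :
    ((Finset.univ.filter fun j : Fin τ =>
        s ≤ γ ⟨2 * j.1, by have := j.isLt; omega⟩ ∧
        γ ⟨2 * j.1, by have := j.isLt; omega⟩ ≤ r).card
      ≤ (Finset.univ.filter fun j : Fin τ =>
        s ≤ γ ⟨2 * j.1 + 1, by have := j.isLt; omega⟩ ∧
        γ ⟨2 * j.1 + 1, by have := j.isLt; omega⟩ ≤ r).card + 1) ∧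
    ((Finset.univ.filter fun j : Fin τ =>
        s ≤ γ ⟨2 * j.1 + 1, by have := j.isLt; omega⟩ ∧
        γ ⟨2 * j.1 + 1, by have := j.isLt; omega⟩ ≤ r).card
      ≤ (Finset.univ.filter fun j : Fin τ =>
        s ≤ γ ⟨2 * j.1, by have := j.isLt; omega⟩ ∧
        γ ⟨2 * j.1, by have := j.isLt; omega⟩ ≤ r).card + 1) := by
  classical
  have hP : ∃ k, ∀ h : k < 2 * τ, s ≤ γ ⟨k, h⟩ :=
    ⟨2 * τ, fun h => absurd h (lt_irrefl _)⟩
  have hQ : ∃ k, ∀ h : k < 2 * τ, r < γ ⟨k, h⟩ :=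
    ⟨2 * τ, fun h => absurd h (lt_irrefl _)⟩
  set a := Nat.find hP with ha
  set b := Nat.find hQ with hb
  have hb2 : b ≤ 2 * τ := Nat.find_le (fun h => absurd h (lt_irrefl _))
  have hmem_s : ∀ i : Fin (2 * τ), s ≤ γ i ↔ a ≤ i.1 := by
    intro i
    constructor
    · intro hi
      exact Nat.find_le (fun h => by
        have : (⟨i.1, h⟩ : Fin (2 * τ)) = i := Fin.ext rfl
        rw [this]; exact hi)
    · intro hi
      have hspec := Nat.find_spec hP
      have halt : a < 2 * τ := lt_of_le_of_lt hi i.isLt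
      have : s ≤ γ ⟨a, halt⟩ := hspec halt
      exact le_trans this (hγ (show (⟨a, halt⟩ : Fin (2 * τ)) ≤ i from hi))
  have hmem_r : ∀ i : Fin (2 * τ), γ i ≤ r ↔ i.1 < b := by
    intro i
    constructor
    · intro hi
      by_contra hcon
      push_neg at hcon
      have hspec := Nat.find_spec hQ
      have hblt : b < 2 * τ := lt_of_le_of_lt hcon i.isLt
      have h1 : r < γ ⟨b, hblt⟩ := hspec hblt
      have h2 : γ (⟨b, hblt⟩ : Fin (2 * τ)) ≤ γ i := hγ (show _ ≤ i from hcon)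
      omega
    · intro hi
      have := Nat.find_min hQ hi
      push_neg at this
      obtain ⟨h, hle⟩ := this
      have : (⟨i.1, h⟩ : Fin (2 * τ)) = i := Fin.ext rfl
      rw [this] at hle
      omega
  have hab : a ≤ b := by
    by_contra hcon
    push_neg at hcon
    have hnp := Nat.find_min hP hcon
    push_neg at hnp
    obtain ⟨h, hlt⟩ := hnp
    have hq : r < γ ⟨b, h⟩ := Nat.find_spec hQ h
    omega
  have hρ : (Finset.univ.filter fun j : Fin τ =>
      s ≤ γ ⟨2 * j.1, by have := j.isLt; omega⟩ ∧
      γ ⟨2 * j.1, by have := j.isLt; omega⟩ ≤ r).card = (b + 1) / 2 - (a + 1) / 2 := by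
    apply card_val_filter τ ((a + 1) / 2) ((b + 1) / 2) (by omega)
    intro j
    rw [hmem_s, hmem_r]
    have := j.isLt
    simp only []
    omega
  have hσ : (Finset.univ.filter fun j : Fin τ =>
      s ≤ γ ⟨2 * j.1 + 1, by have := j.isLt; omega⟩ ∧
      γ ⟨2 * j.1 + 1, by have := j.isLt; omega⟩ ≤ r).card = b / 2 - a / 2 := by
    apply card_val_filter τ (a / 2) (b / 2) (by omega)
    intro j
    rw [hmem_s, hmem_r]
    have := j.isLt
    simp only []
    omega
  rw [hρ, hσ]
  omega
end

section
/- Let α and β be admissible tuples, let γ_1 ≤ γ_2 ≤ ⋯ ≤ γ_{2τ} be the weakly increasing rearrangement of the 2τ entries of α and β, and set γ_odd = (γ_1, γ_3, …, γ_{2τ−1}) and γ_even = (γ_2, γ_4, …, γ_{2τ}). Then γ_odd and γ_even are again admissible tuples. -/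
open MvPolynomial Finset

variable (τ d M : ℕ) (b c s r : Fin M → ℕ)

/-- A tuple α = (α_1,…,α_τ) with entries in {1,…,d} is admissible if it is
weakly increasing and for every i ∈ {1,…,M}, c_i ≤ #{k : s_i ≤ α_k ≤ r_i} ≤ b_i. -/
structure Admissible (α : Fin τ → ℕ) : Prop where
  mono : Monotone α
  mem : ∀ k, 1 ≤ α k ∧ α k ≤ d
  count : ∀ i : Fin M,
    c i ≤ (Finset.univ.filter fun k : Fin τ => s i ≤ α k ∧ α k ≤ r i).card ∧
    (Finset.univ.filter fun k : Fin τ => s i ≤ α k ∧ α k ≤ r i).card ≤ b i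

/-- `IsSplit α β γodd γeven` : γodd and γeven are the odd- and even-position
subsequences of the weakly increasing rearrangement γ of the 2τ entries of α and β. -/
def IsSplit {τ : ℕ} (α β γodd γeven : Fin τ → ℕ) : Prop :=
  ∃ γ : Fin (2 * τ) → ℕ, Monotone γ ∧
    ((List.ofFn γ : List ℕ) : Multiset ℕ)
      = ((List.ofFn α ++ List.ofFn β : List ℕ) : Multiset ℕ) ∧
    ∀ t : Fin τ, γodd t = γ ⟨2 * t.1, by have := t.isLt; omega⟩ ∧
      γeven t = γ ⟨2 * t.1 + 1, by have := t.isLt; omega⟩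

/-- The pair (α, β), in this order, is sorted: α_1 ≤ β_1 ≤ α_2 ≤ β_2 ≤ ⋯ ≤ α_τ ≤ β_τ. -/
def PairOrdered {τ : ℕ} (α β : Fin τ → ℕ) : Prop :=
  (∀ t, α t ≤ β t) ∧ ∀ t t' : Fin τ, t.1 + 1 = t'.1 → β t ≤ α t'

/-- The pair {α, β} is nonsorted: neither (α, β) nor (β, α) is sorted. -/
def Nonsorted {τ : ℕ} (α β : Fin τ → ℕ) : Prop :=
  ¬ (PairOrdered α β ∨ PairOrdered β α)

/-- The toric (Segre–Veronese) homomorphism π with π(y_α) = q_{α_1} ⋯ q_{α_τ},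
where q_1, …, q_d are the variables of `MvPolynomial (Fin d) K` (the 1-based
entry j of α corresponds to the variable indexed by j − 1 : Fin d). -/
noncomputable def piSV (K : Type*) [Field K] :
    MvPolynomial {x : Fin τ → ℕ // Admissible τ d M b c s r x} K →ₐ[K]
      MvPolynomial (Fin d) K :=
  aeval fun v => ∏ k : Fin τ, X (⟨v.1 k - 1, by have := v.2.mem k; omega⟩ : Fin d)

/-- The quadratic move e_{γodd} + e_{γeven} − e_α − e_β. -/
def QuadMove {V : Type*} [DecidableEq V] (α β γodd γeven : V) : V → ℤ := fun v =>
  (if v = γodd then 1 else 0) + (if v = γeven then 1 else 0)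
    - (if v = α then 1 else 0) - (if v = β then 1 else 0)

theorem aux1 (n : ℕ) (f : Fin n → ℕ) (si ri : ℕ) :
    (univ.filter fun k : Fin n => si ≤ f k ∧ f k ≤ ri).card
      = (List.ofFn f).countP (fun x => decide (si ≤ x ∧ x ≤ ri)) := by
  rw [List.ofFn_eq_map, List.countP_map, List.countP_eq_length_filter]
  rw [Fin.univ_def, Finset.filter, Finset.card]
  rfl

theorem aux2 (n lo hi : ℕ) (hhi : hi ≤ n) :
    (univ.filter fun t : Fin n => lo ≤ t.1 ∧ t.1 < hi).card = hi - lo := by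
  rw [← Nat.card_Ico lo hi]
  apply Finset.card_bij (fun (t : Fin n) _ => t.1)
  · intro a ha; simp at ha ⊢; omega
  · intro a ha a' ha' h; exact Fin.ext h
  · intro m hm; simp at hm
    exact ⟨⟨m, by omega⟩, by simp; omega, rfl⟩

theorem downset (n : ℕ) (S : Finset (Fin n)) (hS : ∀ j k : Fin n, j ≤ k → k ∈ S → j ∈ S)
    (k : Fin n) : k ∈ S ↔ k.1 < S.card := by
  constructor
  · intro hk
    have hsub : (univ.filter fun t : Fin n => 0 ≤ t.1 ∧ t.1 < k.1 + 1) ⊆ S := by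
      intro j hj; simp at hj
      exact hS j k (Fin.le_def.mpr (by omega)) hk
    have := Finset.card_le_card hsub
    rw [aux2 n 0 (k.1 + 1) (by omega)] at this; omega
  · intro hk
    by_contra hkS
    have hsub : S ⊆ (univ.filter fun t : Fin n => 0 ≤ t.1 ∧ t.1 < k.1) := by
      intro j hj; simp only [mem_filter, mem_univ, true_and]
      constructor
      · omega
      · by_contra hj'
        exact hkS (hS k j (Fin.le_def.mpr (by omega)) hj)
    have := Finset.card_le_card hsub
    rw [aux2 n 0 k.1 (by omega)] at this; omega

theorem core (n : ℕ) (si ri : ℕ) (hsr : si ≤ ri) (γ : Fin n → ℕ) (hmono : Monotone γ) :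
    ∃ a bb : ℕ, a ≤ bb ∧ bb ≤ n ∧
      (∀ k : Fin n, (si ≤ γ k ∧ γ k ≤ ri) ↔ (a ≤ k.1 ∧ k.1 < bb)) ∧
      (univ.filter fun k : Fin n => si ≤ γ k ∧ γ k ≤ ri).card = bb - a := by
  set A := univ.filter fun k : Fin n => γ k < si with hA
  set B := univ.filter fun k : Fin n => γ k ≤ ri with hB
  have hAd : ∀ k : Fin n, k ∈ A ↔ k.1 < A.card := by
    apply downset
    intro j k hjk hk
    simp only [hA, mem_filter, mem_univ, true_and] at hk ⊢
    exact lt_of_le_of_lt (hmono hjk) hk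
  have hBd : ∀ k : Fin n, k ∈ B ↔ k.1 < B.card := by
    apply downset
    intro j k hjk hk
    simp only [hB, mem_filter, mem_univ, true_and] at hk ⊢
    exact le_trans (hmono hjk) hk
  have hab : A.card ≤ B.card := by
    apply Finset.card_le_card
    intro k hk
    simp only [hA, hB, mem_filter, mem_univ, true_and] at hk ⊢
    omega
  have hbn : B.card ≤ n := by
    have := Finset.card_le_univ B
    simpa using this
  have hchar : ∀ k : Fin n, (si ≤ γ k ∧ γ k ≤ ri) ↔ (A.card ≤ k.1 ∧ k.1 < B.card) := by
    intro k
    have h1 := hAd k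
    have h2 := hBd k
    simp only [hA, hB, mem_filter, mem_univ, true_and] at h1 h2
    rw [hA, hB]
    omega
  refine ⟨A.card, B.card, hab, hbn, hchar, ?_⟩
  rw [Finset.filter_congr (fun k _ => hchar k), aux2 n A.card B.card hbn]


/-- admissibility of the split: if α and β are admissible tuples
and γ_1 ≤ ⋯ ≤ γ_{2τ} is the weakly increasing rearrangement of the 2τ entries
of α and β, then γ_odd = (γ_1, γ_3, …, γ_{2τ−1}) and
γ_even = (γ_2, γ_4, …, γ_{2τ}) are again admissible tuples. -/
theorem stmt_4 (hτ : 2 ≤ τ) (hd : 1 ≤ d) (hM : 1 ≤ M)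
    (hcb : ∀ i, c i ≤ b i) (hs : ∀ i, 1 ≤ s i) (hsr : ∀ i, s i ≤ r i)
    (hrd : ∀ i, r i ≤ d)
    (α β : Fin τ → ℕ)
    (hα : Admissible τ d M b c s r α) (hβ : Admissible τ d M b c s r β)
    (γ : Fin (2 * τ) → ℕ) (hmono : Monotone γ)
    (hperm : ((List.ofFn γ : List ℕ) : Multiset ℕ)
      = ((List.ofFn α ++ List.ofFn β : List ℕ) : Multiset ℕ)) :
    Admissible τ d M b c s r
      (fun t : Fin τ => γ ⟨2 * t.1, by have := t.isLt; omega⟩) ∧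
    Admissible τ d M b c s r
      (fun t : Fin τ => γ ⟨2 * t.1 + 1, by have := t.isLt; omega⟩) := by
  have hperm' : (List.ofFn γ).Perm (List.ofFn α ++ List.ofFn β) := Multiset.coe_eq_coe.mp hperm
  have hmemγ : ∀ k : Fin (2 * τ), 1 ≤ γ k ∧ γ k ≤ d := by
    intro k
    have h1 : γ k ∈ List.ofFn γ := by
      rw [List.mem_ofFn]; exact ⟨k, rfl⟩
    have h2 := hperm'.mem_iff.mp h1
    rw [List.mem_append, List.mem_ofFn, List.mem_ofFn] at h2
    rcases h2 with ⟨j, hj⟩ | ⟨j, hj⟩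
    · rw [← hj]; exact hα.mem j
    · rw [← hj]; exact hβ.mem j
  -- total count over γ
  have hNγ : ∀ i : Fin M,
      (univ.filter fun k : Fin (2 * τ) => s i ≤ γ k ∧ γ k ≤ r i).card
        = (univ.filter fun k : Fin τ => s i ≤ α k ∧ α k ≤ r i).card
          + (univ.filter fun k : Fin τ => s i ≤ β k ∧ β k ≤ r i).card := by
    intro i
    rw [aux1, aux1, aux1, hperm'.countP_eq, List.countP_append]
  have key : ∀ i : Fin M,
      (c i ≤ (univ.filter fun t : Fin τ =>
          s i ≤ γ ⟨2 * t.1, by have := t.isLt; omega⟩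
            ∧ γ ⟨2 * t.1, by have := t.isLt; omega⟩ ≤ r i).card
        ∧ (univ.filter fun t : Fin τ =>
          s i ≤ γ ⟨2 * t.1, by have := t.isLt; omega⟩
            ∧ γ ⟨2 * t.1, by have := t.isLt; omega⟩ ≤ r i).card ≤ b i)
      ∧ (c i ≤ (univ.filter fun t : Fin τ =>
          s i ≤ γ ⟨2 * t.1 + 1, by have := t.isLt; omega⟩
            ∧ γ ⟨2 * t.1 + 1, by have := t.isLt; omega⟩ ≤ r i).card
        ∧ (univ.filter fun t : Fin τ =>
          s i ≤ γ ⟨2 * t.1 + 1, by have := t.isLt; omega⟩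
            ∧ γ ⟨2 * t.1 + 1, by have := t.isLt; omega⟩ ≤ r i).card ≤ b i) := by
    intro i
    obtain ⟨a, bb, hab, hbn, hchar, hcard⟩ := core (2 * τ) (s i) (r i) (hsr i) γ hmono
    have hNαβ := hNγ i
    have hα' := hα.count i
    have hβ' := hβ.count i
    have heven : (univ.filter fun t : Fin τ =>
        s i ≤ γ ⟨2 * t.1, by have := t.isLt; omega⟩
          ∧ γ ⟨2 * t.1, by have := t.isLt; omega⟩ ≤ r i).card
        = (bb + 1) / 2 - (a + 1) / 2 := by
      have := Finset.filter_congr (s := (univ : Finset (Fin τ)))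
        (p := fun t : Fin τ =>
          s i ≤ γ ⟨2 * t.1, by have := t.isLt; omega⟩
            ∧ γ ⟨2 * t.1, by have := t.isLt; omega⟩ ≤ r i)
        (q := fun t : Fin τ => (a + 1) / 2 ≤ t.1 ∧ t.1 < (bb + 1) / 2)
        (fun t _ => by
          have h := hchar ⟨2 * t.1, by have := t.isLt; omega⟩
          simp only at h
          constructor
          · intro hh; have := h.mp hh; omega
          · intro hh; exact h.mpr (by omega))
      rw [this, aux2 τ ((a + 1) / 2) ((bb + 1) / 2) (by omega)]
    have hodd : (univ.filter fun t : Fin τ =>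
        s i ≤ γ ⟨2 * t.1 + 1, by have := t.isLt; omega⟩
          ∧ γ ⟨2 * t.1 + 1, by have := t.isLt; omega⟩ ≤ r i).card
        = bb / 2 - a / 2 := by
      have := Finset.filter_congr (s := (univ : Finset (Fin τ)))
        (p := fun t : Fin τ =>
          s i ≤ γ ⟨2 * t.1 + 1, by have := t.isLt; omega⟩
            ∧ γ ⟨2 * t.1 + 1, by have := t.isLt; omega⟩ ≤ r i)
        (q := fun t : Fin τ => a / 2 ≤ t.1 ∧ t.1 < bb / 2)
        (fun t _ => by
          have h := hchar ⟨2 * t.1 + 1, by have := t.isLt; omega⟩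
          simp only at h
          constructor
          · intro hh; have := h.mp hh; omega
          · intro hh; exact h.mpr (by omega))
      rw [this, aux2 τ (a / 2) (bb / 2) (by omega)]
    rw [heven, hodd]
    omega
  constructor
  · exact ⟨fun t t' h => hmono (Fin.le_def.mpr (by simp; omega)),
      fun t => hmemγ _, fun i => (key i).1⟩
  · exact ⟨fun t t' h => hmono (Fin.le_def.mpr (by simp; omega)),
      fun t => hmemγ _, fun i => (key i).2⟩
end

section
/- The set G of quadratic binomials y_α y_β − y_{γ_odd} y_{γ_even}, taken over all nonsorted pairs {α, β} of admissible tuples, is a minimal generating set of ker π: for every g ∈ G, g does not belong to the ideal of K[y_α : α ∈ V] generated by G \ {g}. -/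
/-!
Write `countLE x v` for the number of entries of a tuple `x` that are at most `v`. For weakly
increasing tuples, `(α, β)` is sorted iff `countLE β ≤ countLE α ≤ countLE β + 1` pointwise, and
the split `(γ_odd, γ_even)` has counting functions `⌈(countLE α + countLE β) / 2⌉` and
`⌊(countLE α + countLE β) / 2⌋`; in particular the split is again admissible.

Replacing a nonsorted pair `y_α y_β` in a monomial by `y_{γ_odd} y_{γ_even}` lowers
`∑_v (countLE · v)²`, or keeps it and spreads the values `∑_v countLE · v` apart, so every
monomial is congruent modulo `(G)` to a sorted one. A sorted family is determined by its total
counts `∑_x countLE x v`: its pointwise minimal member `x` has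
`countLE y ≤ countLE x ≤ countLE y + 1` for every other member `y`, so `countLE x` is the
rounded-up mean. Since `π` only sees the total counts, it is injective on sorted monomials, and
`ker π = (G)` follows.

For minimality, both monomials of every element of `G \ {g}` differ from `y_α y_β`, the first
because the split of a pair is unique and the second because it is sorted. So `(G \ {g})` lies in
the monomial ideal spanned by the monomials not dividing `y_α y_β`, which does not contain `g`.
-/

open MvPolynomial Finset

variable (τ d M : ℕ) (b c s r : Fin M → ℕ)

lemma Multiset.pair_eq_pair_iff {α : Type*} {x y a b : α} :
    ({x, y} : Multiset α) = {a, b} ↔ x = a ∧ y = b ∨ x = b ∧ y = a := by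
  simp only [Multiset.insert_eq_cons, Multiset.cons_eq_cons, Multiset.singleton_inj,
    Multiset.singleton_eq_cons_iff]
  grind

lemma MvPolynomial.X_mul_X_eq_monomial {σ R : Type*} [CommSemiring R] [DecidableEq σ] (a b : σ) :
    (X a * X b : MvPolynomial σ R) = monomial (Multiset.toFinsupp {a, b}) 1 := by
  rw [Multiset.insert_eq_cons, ← Multiset.singleton_add, Multiset.toFinsupp_add,
    Multiset.toFinsupp_singleton, Multiset.toFinsupp_singleton, X, X, monomial_mul, one_mul]

lemma eq_div_of_forall_mem_le_le_add_one {ι : Type*} {S : Multiset ι} {f : ι → ℕ} {c : ℕ}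
    (h : ∀ y ∈ S, f y ≤ c ∧ c ≤ f y + 1) :
    c = (c + (S.map f).sum + Multiset.card S) / (Multiset.card S + 1) := by
  have bounds : (S.map f).sum ≤ c * Multiset.card S ∧
      c * Multiset.card S ≤ (S.map f).sum + Multiset.card S := by
    induction S using Multiset.induction_on with
    | empty => simp
    | cons a S ih =>
      rw [Multiset.forall_mem_cons] at h
      have := ih h.2
      simp only [Multiset.map_cons, Multiset.sum_cons, Multiset.card_cons, Nat.mul_succ]
      omega
  exact (Nat.div_eq_of_lt_le (by rw [Nat.mul_succ]; omega)
    (by rw [Nat.mul_succ, Nat.succ_mul]; omega)).symm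

lemma half_sq_add_sq_le (A B : ℕ) : ((A + B + 1) / 2) ^ 2 + ((A + B) / 2) ^ 2 ≤ A ^ 2 + B ^ 2 := by
  rcases Nat.even_or_odd' (A + B) with ⟨k, hk | hk⟩
  · rw [show (A + B + 1) / 2 = k by omega, show (A + B) / 2 = k by omega]
    nlinarith [sq_nonneg ((A : ℤ) - B)]
  · rw [show (A + B + 1) / 2 = k + 1 by omega, show (A + B) / 2 = k by omega]
    nlinarith [sq_nonneg ((A : ℤ) - B)]

lemma half_sq_add_sq_lt {A B : ℕ} (h : A + 2 ≤ B ∨ B + 2 ≤ A) :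
    ((A + B + 1) / 2) ^ 2 + ((A + B) / 2) ^ 2 < A ^ 2 + B ^ 2 := by
  rcases Nat.even_or_odd' (A + B) with ⟨k, hk | hk⟩
  · rw [show (A + B + 1) / 2 = k by omega, show (A + B) / 2 = k by omega]
    rcases h with h | h <;> nlinarith
  · rw [show (A + B + 1) / 2 = k + 1 by omega, show (A + B) / 2 = k by omega]
    rcases h with h | h <;> nlinarith

lemma half_sq_add_sq_eq {A B : ℕ} (h : A ≤ B + 1) (h' : B ≤ A + 1) :
    ((A + B + 1) / 2) ^ 2 + ((A + B) / 2) ^ 2 = A ^ 2 + B ^ 2 := by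
  rcases le_total A B with hAB | hAB
  · rw [show (A + B + 1) / 2 = B by omega, show (A + B) / 2 = A by omega, add_comm]
  · rw [show (A + B + 1) / 2 = A by omega, show (A + B) / 2 = B by omega]

lemma sq_add_sq_lt_of_add_eq {p q A B : ℕ} (h : p + q = A + B) (hA : A < p) (hB : B < p) :
    A ^ 2 + B ^ 2 < p ^ 2 + q ^ 2 := by
  nlinarith

section CountLE

variable {τ : ℕ}

def countLE (α : Fin τ → ℕ) (v : ℕ) : ℕ := #{k | α k ≤ v}

lemma countLE_le (α : Fin τ → ℕ) (v : ℕ) : countLE α v ≤ τ :=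
  (card_filter_le _ _).trans (card_univ.trans (Fintype.card_fin τ)).le

lemma countLE_mono (α : Fin τ → ℕ) {v w : ℕ} (h : v ≤ w) : countLE α v ≤ countLE α w :=
  card_le_card fun k => by simpa only [mem_filter, mem_univ, true_and] using (·.trans h)

lemma countLE_eq_card {α : Fin τ → ℕ} {v : ℕ} (h : ∀ k, α k ≤ v) : countLE α v = τ := by
  simp [countLE, h]

lemma countLE_eq_zero {α : Fin τ → ℕ} {v : ℕ} (h : ∀ k, v < α k) : countLE α v = 0 := by
  simp [countLE, fun k => (h k).not_ge]

lemma countLE_eq_of_forall_le_iff {α : Fin τ → ℕ} {v m : ℕ} (hm : m ≤ τ)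
    (h : ∀ i : Fin τ, α i ≤ v ↔ i.1 < m) : countLE α v = m := by
  rw [countLE, filter_congr fun i _ => h i, Fin.card_filter_val_lt, min_eq_right hm]

lemma countLE_eq_countP (α : Fin τ → ℕ) (v : ℕ) :
    countLE α v = Multiset.countP (· ≤ v) (List.ofFn α : Multiset ℕ) := by
  rw [← Fin.univ_val_map, Multiset.countP_map, countLE, card_def, filter_val]

lemma card_filter_le_le_eq_countLE_sub {α : Fin τ → ℕ} (hα : ∀ k, 1 ≤ α k) (s r : ℕ) :
    #{k | s ≤ α k ∧ α k ≤ r} = countLE α r - countLE α (s - 1) := by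
  rcases le_or_gt s (r + 1) with hsr | hsr
  · have hsub : ({k | α k ≤ s - 1} : Finset (Fin τ)) ⊆ ({k | α k ≤ r} : Finset (Fin τ)) :=
      fun k hk => by simp only [mem_filter, mem_univ, true_and] at hk ⊢; omega
    rw [countLE, countLE, ← card_sdiff_of_subset hsub]
    congr 1
    ext k
    simp only [mem_filter, mem_univ, true_and, mem_sdiff]
    have := hα k
    omega
  · rw [Nat.sub_eq_zero_of_le (countLE_mono α (by omega)), card_eq_zero, filter_eq_empty_iff]
    intro k _
    omega

variable {α β : Fin τ → ℕ}

lemma Monotone.le_iff_lt_countLE (hα : Monotone α) (i : Fin τ) (v : ℕ) :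
    α i ≤ v ↔ i.1 < countLE α v := by
  constructor
  · intro h
    have : Iic i ⊆ ({k | α k ≤ v} : Finset (Fin τ)) := fun k hk => by
      simp only [mem_filter, mem_univ, true_and]
      exact (hα (mem_Iic.mp hk)).trans h
    have := card_le_card this
    rw [Fin.card_Iic] at this
    exact this
  · intro h
    by_contra hlt
    have : ({k | α k ≤ v} : Finset (Fin τ)) ⊆ Iio i := fun k hk => by
      simp only [mem_filter, mem_univ, true_and] at hk
      exact mem_Iio.mpr (lt_of_not_ge fun hik => hlt (hk.trans' (hα hik)))
    have := card_le_card this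
    rw [Fin.card_Iio] at this
    exact absurd h (not_lt.mpr this)

lemma Monotone.eq_of_countLE_eq (hα : Monotone α) (hβ : Monotone β)
    (h : ∀ v, countLE α v = countLE β v) : α = β := by
  funext k
  apply le_antisymm
  · rw [hα.le_iff_lt_countLE, h, ← hβ.le_iff_lt_countLE]
  · rw [hβ.le_iff_lt_countLE, ← h, ← hα.le_iff_lt_countLE]

lemma Monotone.pairOrdered_iff_countLE (hα : Monotone α) (hβ : Monotone β) :
    PairOrdered α β ↔ ∀ v, countLE β v ≤ countLE α v ∧ countLE α v ≤ countLE β v + 1 := by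
  constructor
  · rintro ⟨hle, hstep⟩ v
    constructor
    · by_contra! hlt
      have hi : countLE α v < τ := hlt.trans_le (countLE_le β v)
      have hβi := (hβ.le_iff_lt_countLE ⟨_, hi⟩ v).mpr hlt
      exact (lt_irrefl (countLE α v)) ((hα.le_iff_lt_countLE ⟨_, hi⟩ v).mp ((hle _).trans hβi))
    · by_contra! hlt
      have hi : countLE β v + 1 < τ := hlt.trans_le (countLE_le α v)
      have hαi := (hα.le_iff_lt_countLE ⟨_, hi⟩ v).mpr hlt
      have := (hβ.le_iff_lt_countLE ⟨countLE β v, by omega⟩ v).mp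
        ((hstep _ ⟨_, hi⟩ rfl).trans hαi)
      exact lt_irrefl _ this
  · intro h
    refine ⟨fun t => ?_, fun t t' htt' => ?_⟩
    · rw [hα.le_iff_lt_countLE]
      exact ((hβ.le_iff_lt_countLE t _).mp le_rfl).trans_le (h _).1
    · rw [hβ.le_iff_lt_countLE]
      have := (hα.le_iff_lt_countLE t' _).mp le_rfl
      have := (h (α t')).2
      omega

end CountLE

def SortedPair {τ : ℕ} (α β : Fin τ → ℕ) : Prop :=
  PairOrdered α β ∨ PairOrdered β α

section Split

variable {τ : ℕ} {α β o e : Fin τ → ℕ}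

lemma IsSplit.le_iff (h : IsSplit α β o e) (v : ℕ) :
    (∀ t, o t ≤ v ↔ 2 * t.1 < countLE α v + countLE β v) ∧
      ∀ t, e t ≤ v ↔ 2 * t.1 + 1 < countLE α v + countLE β v := by
  obtain ⟨γ, hγ, hperm, hoe⟩ := h
  have hcount : countLE γ v = countLE α v + countLE β v := by
    rw [countLE_eq_countP, hperm, ← Multiset.coe_add, Multiset.countP_add, ← countLE_eq_countP,
      ← countLE_eq_countP]
  exact ⟨fun t => by rw [(hoe t).1, hγ.le_iff_lt_countLE, hcount],
    fun t => by rw [(hoe t).2, hγ.le_iff_lt_countLE, hcount]⟩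

lemma IsSplit.countLE_fst (h : IsSplit α β o e) (v : ℕ) :
    countLE o v = (countLE α v + countLE β v + 1) / 2 := by
  have := countLE_le α v
  have := countLE_le β v
  exact countLE_eq_of_forall_le_iff (by omega) fun t => ((h.le_iff v).1 t).trans (by omega)

lemma IsSplit.countLE_snd (h : IsSplit α β o e) (v : ℕ) :
    countLE e v = (countLE α v + countLE β v) / 2 := by
  have := countLE_le α v
  have := countLE_le β v
  exact countLE_eq_of_forall_le_iff (by omega) fun t => ((h.le_iff v).2 t).trans (by omega)

lemma IsSplit.monotone_fst (h : IsSplit α β o e) : Monotone o := by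
  obtain ⟨γ, hγ, -, hoe⟩ := h
  intro t t' htt'
  rw [(hoe t).1, (hoe t').1]
  exact hγ (Fin.mk_le_mk.mpr (by have : t.1 ≤ t'.1 := htt'; omega))

lemma IsSplit.monotone_snd (h : IsSplit α β o e) : Monotone e := by
  obtain ⟨γ, hγ, -, hoe⟩ := h
  intro t t' htt'
  rw [(hoe t).2, (hoe t').2]
  exact hγ (Fin.mk_le_mk.mpr (by have : t.1 ≤ t'.1 := htt'; omega))

lemma IsSplit.pairOrdered (h : IsSplit α β o e) : PairOrdered o e :=
  (h.monotone_fst.pairOrdered_iff_countLE h.monotone_snd).mpr fun v => by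
    rw [h.countLE_fst, h.countLE_snd]
    omega

lemma exists_isSplit (α β : Fin τ → ℕ) : ∃ o e, IsSplit α β o e := by
  set f : Fin (2 * τ) → ℕ := Fin.append α β ∘ Fin.cast (two_mul τ)
  refine ⟨fun t => (f ∘ Tuple.sort f) ⟨2 * t.1, by omega⟩,
    fun t => (f ∘ Tuple.sort f) ⟨2 * t.1 + 1, by omega⟩,
    f ∘ Tuple.sort f, Tuple.monotone_sort f, ?_, fun t => ⟨rfl, rfl⟩⟩
  rw [← Fin.univ_val_map, ← Multiset.map_map, Multiset.map_univ_val_equiv, ← Multiset.map_map,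
    show (Fin.cast (two_mul τ) : Fin (2 * τ) → Fin (τ + τ)) = finCongr (two_mul τ) from rfl,
    Multiset.map_univ_val_equiv, Fin.univ_val_map, List.ofFn_fin_append]

lemma IsSplit.unique {τ : ℕ} {α β α' β' o e o' e' : Fin τ → ℕ} (h : IsSplit α β o e)
    (h' : IsSplit α' β' o' e')
    (hcount : ∀ v, countLE α v + countLE β v = countLE α' v + countLE β' v) : o = o' ∧ e = e' :=
  ⟨h.monotone_fst.eq_of_countLE_eq h'.monotone_fst fun v => by
      rw [h.countLE_fst, h'.countLE_fst, hcount],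
    h.monotone_snd.eq_of_countLE_eq h'.monotone_snd fun v => by
      rw [h.countLE_snd, h'.countLE_snd, hcount]⟩

end Split

section AdmissibleSplit

variable {τ d M : ℕ} {b c s r : Fin M → ℕ}

local notation "V" => {x : Fin τ → ℕ // Admissible τ d M b c s r x}

lemma Admissible.of_countLE_eq_half {x α β : Fin τ → ℕ} (hx : Monotone x)
    (hα : Admissible τ d M b c s r α) (hβ : Admissible τ d M b c s r β) {δ : ℕ} (hδ : δ ≤ 1)
    (h : ∀ v, countLE x v = (countLE α v + countLE β v + δ) / 2) :
    Admissible τ d M b c s r x := by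
  have hx0 : countLE x 0 = 0 := by
    rw [h, countLE_eq_zero fun k => (hα.mem k).1, countLE_eq_zero fun k => (hβ.mem k).1]
    omega
  have hxd : countLE x d = τ := by
    rw [h, countLE_eq_card fun k => (hα.mem k).2, countLE_eq_card fun k => (hβ.mem k).2]
    omega
  have hmem : ∀ k, 1 ≤ x k ∧ x k ≤ d := fun k => by
    have h0 := (hx.le_iff_lt_countLE k 0).not
    have hd := (hx.le_iff_lt_countLE k d).mpr (hxd.symm ▸ k.isLt)
    omega
  refine ⟨hx, hmem, fun i => ?_⟩
  rw [card_filter_le_le_eq_countLE_sub fun k => (hmem k).1]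
  have hαi := hα.count i
  have hβi := hβ.count i
  rw [card_filter_le_le_eq_countLE_sub fun k => (hα.mem k).1] at hαi
  rw [card_filter_le_le_eq_countLE_sub fun k => (hβ.mem k).1] at hβi
  rw [h, h]
  rcases le_total (s i - 1) (r i) with hsr | hsr <;>
    have := countLE_mono α hsr <;> have := countLE_mono β hsr <;> omega

lemma exists_admissible_isSplit (a a' : V) : ∃ o e : V, IsSplit a.1 a'.1 o.1 e.1 := by
  obtain ⟨o, e, h⟩ := exists_isSplit a.1 a'.1
  exact ⟨⟨o, .of_countLE_eq_half h.monotone_fst a.2 a'.2 le_rfl h.countLE_fst⟩,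
    ⟨e, .of_countLE_eq_half h.monotone_snd a.2 a'.2 zero_le_one h.countLE_snd⟩, h⟩

end AdmissibleSplit

section SortedFamily

variable {τ d M : ℕ} {b c s r : Fin M → ℕ}

local notation "V" => {x : Fin τ → ℕ // Admissible τ d M b c s r x}

def IsSortedFamily (S : Multiset V) : Prop :=
  ∀ a a', {a, a'} ≤ S → SortedPair a.1 a'.1

def totalCount (S : Multiset V) (v : ℕ) : ℕ :=
  (S.map fun x => countLE x.1 v).sum

lemma totalCount_cons (x : V) (S : Multiset V) (v : ℕ) :
    totalCount (x ::ₘ S) v = countLE x.1 v + totalCount S v := by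
  rw [totalCount, Multiset.map_cons, Multiset.sum_cons, totalCount]

lemma IsSortedFamily.mono {S S' : Multiset V} (h : IsSortedFamily S) (hle : S' ≤ S) :
    IsSortedFamily S' :=
  fun a a' ha => h a a' (ha.trans hle)

lemma IsSortedFamily.exists_eq_cons {S : Multiset V} (h : IsSortedFamily S) (hS : S ≠ 0) :
    ∃ x S0, S = x ::ₘ S0 ∧ ∀ y ∈ S0, PairOrdered x.1 y.1 := by
  obtain ⟨x, hxS, hmin⟩ :=
    exists_minimalFor_of_wellFoundedLT (· ∈ S) (fun y : V => y.1)
      (Multiset.exists_mem_of_ne_zero hS)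
  refine ⟨x, S.erase x, (Multiset.cons_erase hxS).symm, fun y hy => ?_⟩
  have hpair : {x, y} ≤ S := by
    rw [← Multiset.cons_erase hxS, Multiset.insert_eq_cons]
    exact Multiset.cons_le_cons x (Multiset.singleton_le.mpr hy)
  rcases h x y hpair with hxy | hyx
  · exact hxy
  · have hxy : x.1 = y.1 := le_antisymm (hmin (Multiset.mem_of_mem_erase hy) hyx.1) hyx.1
    rwa [hxy] at hyx ⊢

lemma countLE_eq_of_eq_cons {S S0 : Multiset V} {x : V} (hS : S = x ::ₘ S0)
    (hx : ∀ y ∈ S0, PairOrdered x.1 y.1) (v : ℕ) :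
    countLE x.1 v = (totalCount S v + Multiset.card S0) / Multiset.card S := by
  rw [hS, totalCount_cons, Multiset.card_cons]
  exact eq_div_of_forall_mem_le_le_add_one fun y hy =>
    (x.2.mono.pairOrdered_iff_countLE y.2.mono).mp (hx y hy) v

theorem IsSortedFamily.eq_of_totalCount_eq {S S' : Multiset V} (hS : IsSortedFamily S)
    (hS' : IsSortedFamily S') (hcard : Multiset.card S = Multiset.card S')
    (h : ∀ v, totalCount S v = totalCount S' v) : S = S' := by
  induction hn : Multiset.card S generalizing S S' with
  | zero =>
    rw [Multiset.card_eq_zero.mp hn, Multiset.card_eq_zero.mp (by omega : Multiset.card S' = 0)]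
  | succ n ih =>
    obtain ⟨x, S0, rfl, hx⟩ := hS.exists_eq_cons (Multiset.card_pos.mp (by omega))
    obtain ⟨x', S0', rfl, hx'⟩ := hS'.exists_eq_cons (Multiset.card_pos.mp (by omega))
    simp only [Multiset.card_cons, Nat.add_right_cancel_iff] at hcard hn
    obtain rfl : x = x' := Subtype.ext <| x.2.mono.eq_of_countLE_eq x'.2.mono fun v => by
      rw [countLE_eq_of_eq_cons rfl hx, countLE_eq_of_eq_cons rfl hx', h v, Multiset.card_cons,
        Multiset.card_cons, hcard]
    congr 1
    refine ih (hS.mono (Multiset.le_cons_self _ _)) (hS'.mono (Multiset.le_cons_self _ _)) hcard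
      (fun v => ?_) hn
    have := h v
    rw [totalCount_cons, totalCount_cons] at this
    omega

end SortedFamily

section Measure

variable {τ : ℕ}

def countSum (d : ℕ) (x : Fin τ → ℕ) : ℕ := ∑ v ∈ range d, countLE x v

def sqCountSum (d : ℕ) (x : Fin τ → ℕ) : ℕ := ∑ v ∈ range d, countLE x v ^ 2

lemma countSum_le (d : ℕ) (x : Fin τ → ℕ) : countSum d x ≤ τ * d :=
  (sum_le_sum fun v _ => countLE_le x v).trans
    (by rw [sum_const, card_range, smul_eq_mul, mul_comm])

lemma sqCountSum_lt_or_countSum_spread {d : ℕ} {α β o e : Fin τ → ℕ} (hα : Monotone α)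
    (hβ : Monotone β) (hαd : ∀ k, α k ≤ d) (hβd : ∀ k, β k ≤ d) (hns : Nonsorted α β)
    (hs : IsSplit α β o e) :
    sqCountSum d o + sqCountSum d e < sqCountSum d α + sqCountSum d β ∨
      sqCountSum d o + sqCountSum d e = sqCountSum d α + sqCountSum d β ∧
        countSum d α ^ 2 + countSum d β ^ 2 < countSum d o ^ 2 + countSum d e ^ 2 := by
  simp only [sqCountSum, countSum, ← sum_add_distrib, hs.countLE_fst, hs.countLE_snd]
  by_cases hfar : ∃ v < d, countLE α v + 2 ≤ countLE β v ∨ countLE β v + 2 ≤ countLE α v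
  · obtain ⟨v, hv, hfar⟩ := hfar
    exact Or.inl (sum_lt_sum (fun v _ => half_sq_add_sq_le _ _)
      ⟨v, mem_range.mpr hv, half_sq_add_sq_lt hfar⟩)
  push Not at hfar
  -- Now the counting functions of `α` and `β` differ by at most one, so those of the split are
  -- their pointwise maximum and minimum.
  have htop : ∀ v, d ≤ v → countLE α v = τ ∧ countLE β v = τ := fun v hv =>
    ⟨countLE_eq_card fun k => (hαd k).trans hv, countLE_eq_card fun k => (hβd k).trans hv⟩
  have hnear : ∀ v, countLE α v ≤ countLE β v + 1 ∧ countLE β v ≤ countLE α v + 1 := fun v => by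
    rcases lt_or_ge v d with hv | hv
    · have := hfar v hv
      omega
    · have := htop v hv
      omega
  obtain ⟨v, hv⟩ : ∃ v, countLE α v < countLE β v := by
    by_contra! hc
    exact hns (Or.inl ((hα.pairOrdered_iff_countLE hβ).mpr fun v => ⟨hc v, (hnear v).1⟩))
  obtain ⟨w, hw⟩ : ∃ w, countLE β w < countLE α w := by
    by_contra! hc
    exact hns (Or.inr ((hβ.pairOrdered_iff_countLE hα).mpr fun w => ⟨hc w, (hnear w).2⟩))
  have hvd : v < d := lt_of_not_ge fun h => by have := htop v h; omega
  have hwd : w < d := lt_of_not_ge fun h => by have := htop w h; omega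
  refine Or.inr ⟨sum_congr rfl fun v _ => half_sq_add_sq_eq (hnear v).1 (hnear v).2,
    sq_add_sq_lt_of_add_eq ?_ ?_ ?_⟩
  · rw [← sum_add_distrib, ← sum_add_distrib]
    exact sum_congr rfl fun v _ => by omega
  · exact sum_lt_sum (fun v _ => by have := hnear v; omega) ⟨v, mem_range.mpr hvd, by omega⟩
  · exact sum_lt_sum (fun v _ => by have := hnear v; omega) ⟨w, mem_range.mpr hwd, by omega⟩

end Measure

def sortingBinomials (K : Type*) [Field K] :
    Set (MvPolynomial {x : Fin τ → ℕ // Admissible τ d M b c s r x} K) :=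
  { g | ∃ α β γodd γeven : {x : Fin τ → ℕ // Admissible τ d M b c s r x},
    Nonsorted α.1 β.1 ∧ IsSplit α.1 β.1 γodd.1 γeven.1 ∧ g = X α * X β - X γodd * X γeven }

section Reduction

variable {τ d M : ℕ} {b c s r : Fin M → ℕ}

local notation "V" => {x : Fin τ → ℕ // Admissible τ d M b c s r x}

-- The second component is a deficit, so that spreading the `countSum` values apart lowers it.
def sortMeasure (S : Multiset V) : ℕ ×ₗ ℕ :=
  toLex ((S.map fun x => sqCountSum d x.1).sum,
    (S.map fun x => (τ * d) ^ 2 - countSum d x.1 ^ 2).sum)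

lemma sortMeasure_lt {a a' o e : V} (S0 : Multiset V) (hns : Nonsorted a.1 a'.1)
    (hs : IsSplit a.1 a'.1 o.1 e.1) : sortMeasure ({o, e} + S0) < sortMeasure ({a, a'} + S0) := by
  have hsq : ∀ x : V, countSum d x.1 ^ 2 ≤ (τ * d) ^ 2 := fun x =>
    Nat.pow_le_pow_left (countSum_le d x.1) 2
  have := hsq a
  have := hsq a'
  have := hsq o
  have := hsq e
  rw [sortMeasure, sortMeasure, Prod.Lex.toLex_lt_toLex]
  simp only [Multiset.map_add, Multiset.sum_add, Multiset.insert_eq_cons, Multiset.map_cons,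
    Multiset.sum_cons, Multiset.map_singleton, Multiset.sum_singleton]
  have := sqCountSum_lt_or_countSum_spread a.2.mono a'.2.mono (fun k => (a.2.mem k).2)
    (fun k => (a'.2.mem k).2) hns hs
  omega

lemma exists_eq_pair_add_of_not_isSortedFamily {S : Multiset V} (h : ¬ IsSortedFamily S) :
    ∃ a a' S0, S = {a, a'} + S0 ∧ Nonsorted a.1 a'.1 := by
  simp only [IsSortedFamily, not_forall] at h
  obtain ⟨a, a', hle, hns⟩ := h
  obtain ⟨S0, rfl⟩ := Multiset.le_iff_exists_add.mp hle
  exact ⟨a, a', S0, rfl, hns⟩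

theorem exists_isSortedFamily_sub_mem_span (K : Type*) [Field K] (S : Multiset V) :
    ∃ T, IsSortedFamily T ∧ monomial (Multiset.toFinsupp S) (1 : K)
      - monomial (Multiset.toFinsupp T) 1 ∈ Ideal.span (sortingBinomials τ d M b c s r K) := by
  induction S using (InvImage.wf sortMeasure wellFounded_lt).induction with | _ S ih
  by_cases hS : IsSortedFamily S
  · exact ⟨S, hS, by rw [sub_self]; exact zero_mem _⟩
  obtain ⟨a, a', S0, rfl, hns⟩ := exists_eq_pair_add_of_not_isSortedFamily hS
  obtain ⟨o, e, hsplit⟩ := exists_admissible_isSplit a a'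
  obtain ⟨T, hT, hmem⟩ := ih _ (sortMeasure_lt S0 hns hsplit)
  have hmove : X a * X a' - X o * X e ∈ sortingBinomials τ d M b c s r K :=
    ⟨a, a', o, e, hns, hsplit, rfl⟩
  refine ⟨T, hT, ?_⟩
  have hdecomp : monomial (Multiset.toFinsupp ({a, a'} + S0)) (1 : K)
      - monomial (Multiset.toFinsupp T) 1
      = (X a * X a' - X o * X e) * monomial (Multiset.toFinsupp S0) 1
        + (monomial (Multiset.toFinsupp ({o, e} + S0)) 1 - monomial (Multiset.toFinsupp T) 1) := by
    have hmul : ∀ m m' : V →₀ ℕ, monomial (m + m') (1 : K) = monomial m 1 * monomial m' 1 :=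
      fun m m' => by rw [monomial_mul, one_mul]
    simp only [Multiset.toFinsupp_add, hmul, ← X_mul_X_eq_monomial]
    ring
  rw [hdecomp]
  exact add_mem (Ideal.mul_mem_right _ _ (Ideal.subset_span hmove)) hmem

end Reduction

section Image

variable {τ d M : ℕ} {b c s r : Fin M → ℕ} {K : Type*} [Field K]

local notation "V" => {x : Fin τ → ℕ // Admissible τ d M b c s r x}

def qIndex (x : V) (k : Fin τ) : Fin d :=
  ⟨x.1 k - 1, by have := x.2.mem k; omega⟩

noncomputable def qExponent (x : V) : Fin d →₀ ℕ :=
  ∑ k, Finsupp.single (qIndex x k) 1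

noncomputable def imageExponent (m : V →₀ ℕ) : Fin d →₀ ℕ :=
  m.sum fun x n => n • qExponent x

lemma piSV_monomial (m : V →₀ ℕ) (a : K) :
    piSV τ d M b c s r K (monomial m a) = monomial (imageExponent m) a := by
  have hX : ∀ x : V, (∏ k, X (qIndex x k) : MvPolynomial (Fin d) K) = monomial (qExponent x) 1 :=
    fun x => by rw [qExponent, monomial_sum_one]; rfl
  rw [piSV, aeval_monomial]
  change algebraMap K _ a * m.prod (fun x n => (∏ k, X (qIndex x k)) ^ n) = _
  simp only [hX, monomial_pow, one_pow]
  rw [imageExponent, monomial_finsupp_sum_index, algebraMap_eq]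

lemma piSV_eq_sum (p : MvPolynomial V K) :
    piSV τ d M b c s r K p = ∑ m ∈ p.support, monomial (imageExponent m) (coeff m p) := by
  conv_lhs => rw [p.as_sum]
  simp only [map_sum, piSV_monomial]

lemma coeff_piSV_of_injOn {S : Set (V →₀ ℕ)} (hS : Set.InjOn imageExponent S)
    {p : MvPolynomial V K} (hp : ↑p.support ⊆ S) {m : V →₀ ℕ} (hm : m ∈ S) :
    coeff (imageExponent m) (piSV τ d M b c s r K p) = coeff m p := by
  classical
  rw [piSV_eq_sum, coeff_sum]
  simp only [coeff_monomial]
  rw [sum_eq_single m]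
  · exact if_pos rfl
  · exact fun m' hm' hne => if_neg fun h => hne (hS (hp hm') hm h)
  · exact fun hm' => by rw [if_pos rfl, notMem_support_iff.mp hm']

noncomputable def countBelow (w : ℕ) : (Fin d →₀ ℕ) →+ ℕ :=
  ∑ j with j.1 < w, Finsupp.applyAddHom j

lemma countBelow_apply (w : ℕ) (u : Fin d →₀ ℕ) : countBelow w u = ∑ j with j.1 < w, u j := by
  simp [countBelow]

lemma countBelow_succ (u : Fin d →₀ ℕ) (j : Fin d) :
    countBelow (j.1 + 1) u = countBelow j.1 u + u j := by
  have : univ.filter (fun i : Fin d => i.1 < j.1 + 1) = insert j (univ.filter (·.1 < j.1)) := by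
    ext i
    simp only [mem_filter, mem_univ, true_and, mem_insert, Fin.ext_iff]
    omega
  rw [countBelow_apply, countBelow_apply, this, sum_insert (by simp), add_comm]

lemma eq_of_countBelow_eq {u u' : Fin d →₀ ℕ} (h : ∀ w, countBelow w u = countBelow w u') :
    u = u' := by
  ext j
  have := countBelow_succ u j
  have := countBelow_succ u' j
  have := h j.1
  have := h (j.1 + 1)
  omega

lemma countBelow_qExponent (x : V) (w : ℕ) : countBelow w (qExponent x) = countLE x.1 w := by
  simp only [qExponent, map_sum, countBelow_apply, Finsupp.single_apply, sum_ite_eq, mem_filter,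
    mem_univ, true_and, countLE]
  rw [sum_boole, Nat.cast_id]
  exact congrArg card (filter_congr fun k _ => by have := (x.2.mem k).1; simp only [qIndex]; omega)

lemma countBelow_imageExponent (S : Multiset V) (w : ℕ) :
    countBelow w (imageExponent (Multiset.toFinsupp S)) = totalCount S w := by
  classical
  simp only [imageExponent, Finsupp.sum, map_sum, map_nsmul, countBelow_qExponent, smul_eq_mul,
    totalCount, sum_multiset_map_count, Multiset.toFinsupp_support, Multiset.toFinsupp_apply]

lemma imageExponent_toFinsupp_eq_iff (S T : Multiset V) :
    imageExponent (Multiset.toFinsupp S) = imageExponent (Multiset.toFinsupp T) ↔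
      ∀ w, totalCount S w = totalCount T w :=
  ⟨fun h w => by rw [← countBelow_imageExponent, h, countBelow_imageExponent],
    fun h => eq_of_countBelow_eq fun w => by
      rw [countBelow_imageExponent, countBelow_imageExponent, h]⟩

lemma totalCount_eq_mul_card (S : Multiset V) : totalCount S d = τ * Multiset.card S := by
  rw [totalCount, Multiset.map_congr rfl fun x _ => countLE_eq_card fun k => (x.2.mem k).2,
    Multiset.map_const', Multiset.sum_replicate, smul_eq_mul, mul_comm]

end Image

section Main

variable {τ d M : ℕ} {b c s r : Fin M → ℕ} (K : Type*) [Field K]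

local notation "V" => {x : Fin τ → ℕ // Admissible τ d M b c s r x}

theorem span_sortingBinomials_le_ker :
    Ideal.span (sortingBinomials τ d M b c s r K) ≤ RingHom.ker (piSV τ d M b c s r K) := by
  rw [Ideal.span_le]
  rintro g ⟨α, β, o, e, -, hs, rfl⟩
  rw [SetLike.mem_coe, RingHom.mem_ker, map_sub, X_mul_X_eq_monomial, X_mul_X_eq_monomial,
    piSV_monomial, piSV_monomial, sub_eq_zero]
  have hcount : ∀ w, totalCount {α, β} w = totalCount {o, e} w := fun w => by
    simp only [totalCount, Multiset.insert_eq_cons, Multiset.map_cons, Multiset.sum_cons,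
      Multiset.map_singleton, Multiset.sum_singleton, hs.countLE_fst, hs.countLE_snd]
    omega
  rw [(imageExponent_toFinsupp_eq_iff _ _).mpr hcount]

lemma exists_sub_mem_span_of_support_subset_sorted (p : MvPolynomial V K) :
    ∃ q : MvPolynomial V K,
      (q.support : Set (V →₀ ℕ)) ⊆ {m | IsSortedFamily (Finsupp.toMultiset m)} ∧
      p - q ∈ Ideal.span (sortingBinomials τ d M b c s r K) := by
  classical
  induction p using MvPolynomial.induction_on' with
  | monomial m a =>
    obtain ⟨T, hT, hmem⟩ := exists_isSortedFamily_sub_mem_span K (Finsupp.toMultiset m)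
    rw [Finsupp.toMultiset_toFinsupp] at hmem
    refine ⟨monomial (Multiset.toFinsupp T) a, fun n hn => ?_, ?_⟩
    · rw [Finset.mem_singleton.mp (support_monomial_subset hn)]
      change IsSortedFamily (Finsupp.toMultiset (Multiset.toFinsupp T))
      rwa [Multiset.toFinsupp_toMultiset]
    · have hC : monomial m a - monomial (Multiset.toFinsupp T) a
          = C a * (monomial m 1 - monomial (Multiset.toFinsupp T) 1) := by
        rw [mul_sub, C_mul_monomial, C_mul_monomial, mul_one]
      rw [hC]
      exact Ideal.mul_mem_left _ _ hmem
  | add p p' hp hp' =>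
    obtain ⟨q, hq, hpq⟩ := hp
    obtain ⟨q', hq', hpq'⟩ := hp'
    refine ⟨q + q', fun n hn => ?_, ?_⟩
    · rcases Finset.mem_union.mp (support_add hn) with h | h
      exacts [hq h, hq' h]
    · rw [add_sub_add_comm]
      exact add_mem hpq hpq'

lemma injOn_imageExponent (hτ : 0 < τ) :
    Set.InjOn imageExponent {m : V →₀ ℕ | IsSortedFamily (Finsupp.toMultiset m)} := by
  classical
  intro m hm m' hm' h
  rw [← Finsupp.toMultiset_toFinsupp m, ← Finsupp.toMultiset_toFinsupp m'] at h ⊢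
  have hc := (imageExponent_toFinsupp_eq_iff _ _).mp h
  have hcard : Multiset.card (Finsupp.toMultiset m) = Multiset.card (Finsupp.toMultiset m') :=
    Nat.eq_of_mul_eq_mul_left hτ (by rw [← totalCount_eq_mul_card, ← totalCount_eq_mul_card, hc])
  rw [IsSortedFamily.eq_of_totalCount_eq hm hm' hcard hc]

theorem ker_piSV_le_span (hτ : 0 < τ) :
    RingHom.ker (piSV τ d M b c s r K) ≤ Ideal.span (sortingBinomials τ d M b c s r K) := by
  intro p hp
  obtain ⟨q, hq, hpq⟩ := exists_sub_mem_span_of_support_subset_sorted K p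
  have hπq : piSV τ d M b c s r K q = 0 := by
    have := span_sortingBinomials_le_ker K hpq
    rwa [RingHom.mem_ker, map_sub, RingHom.mem_ker.mp hp, zero_sub, neg_eq_zero] at this
  have hq0 : q = 0 := by
    ext m
    rw [coeff_zero]
    by_cases hm : m ∈ {m : V →₀ ℕ | IsSortedFamily (Finsupp.toMultiset m)}
    · rw [← coeff_piSV_of_injOn (injOn_imageExponent hτ) hq hm, hπq, coeff_zero]
    · exact notMem_support_iff.mp fun h => hm (hq h)
  simpa [hq0] using hpq

theorem notMem_span_sortingBinomials_diff {g : MvPolynomial V K}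
    (hg : g ∈ sortingBinomials τ d M b c s r K) :
    g ∉ Ideal.span (sortingBinomials τ d M b c s r K \ {g}) := by
  classical
  obtain ⟨α, β, o, e, hns, hs, rfl⟩ := hg
  set I : Ideal (MvPolynomial V K) :=
    Ideal.span ((fun n => monomial n 1) '' {n | ¬ n ≤ Multiset.toFinsupp {α, β}})
  have hpair : ∀ x y : V, ({x, y} : Multiset V) ≠ {α, β} → X x * X y ∈ I := fun x y hne => by
    rw [X_mul_X_eq_monomial]
    refine Ideal.subset_span ⟨_, fun hle => hne ?_, rfl⟩
    have hle' := Finsupp.toMultiset_strictMono.monotone hle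
    rw [Multiset.toFinsupp_toMultiset, Multiset.toFinsupp_toMultiset] at hle'
    exact Multiset.eq_of_le_of_card_le hle' (by simp)
  have hsorted : ∀ x y : V, PairOrdered x.1 y.1 → ({x, y} : Multiset V) ≠ {α, β} := by
    intro x y hxy heq
    rcases Multiset.pair_eq_pair_iff.mp heq with ⟨rfl, rfl⟩ | ⟨rfl, rfl⟩
    exacts [hns (Or.inl hxy), hns (Or.inr hxy)]
  have hle : Ideal.span (sortingBinomials τ d M b c s r K \ {X α * X β - X o * X e}) ≤ I := by
    rw [Ideal.span_le]
    rintro _ ⟨⟨α', β', o', e', -, hs', rfl⟩, hne⟩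
    refine sub_mem (hpair α' β' fun heq => hne ?_) (hpair o' e' (hsorted o' e' hs'.pairOrdered))
    rw [Set.mem_singleton_iff]
    rcases Multiset.pair_eq_pair_iff.mp heq with ⟨rfl, rfl⟩ | ⟨rfl, rfl⟩
    · obtain ⟨ho, he⟩ := hs'.unique hs fun v => rfl
      rw [Subtype.ext ho, Subtype.ext he]
    · obtain ⟨ho, he⟩ := hs'.unique hs fun v => add_comm _ _
      rw [Subtype.ext ho, Subtype.ext he, mul_comm]
  intro hmem
  have hαβ : X α * X β ∈ I := by
    simpa using add_mem (hle hmem) (hpair o e (hsorted o e hs.pairOrdered))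
  rw [X_mul_X_eq_monomial, mem_ideal_span_monomial_image] at hαβ
  obtain ⟨n, hn, hle'⟩ := hαβ (Multiset.toFinsupp {α, β})
    (by rw [support_monomial, if_neg one_ne_zero]; exact mem_singleton_self _)
  exact hn hle'

end Main

theorem stmt_8 (hτ : 2 ≤ τ)
    (K : Type*) [Field K]
    (G : Set (MvPolynomial {x : Fin τ → ℕ // Admissible τ d M b c s r x} K))
    (hG : G = { g | ∃ α β γodd γeven : {x : Fin τ → ℕ // Admissible τ d M b c s r x},
      Nonsorted α.1 β.1 ∧ IsSplit α.1 β.1 γodd.1 γeven.1 ∧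
      g = X α * X β - X γodd * X γeven }) :
    RingHom.ker (piSV τ d M b c s r K) = Ideal.span G ∧
    ∀ g ∈ G, g ∉ Ideal.span (G \ {g}) := by
  subst hG
  exact ⟨le_antisymm (ker_piSV_le_span K (by omega)) (span_sortingBinomials_le_ker K),
    fun g hg => notMem_span_sortingBinomials_diff K hg⟩
end
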